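/- arXiv:1910.04789 — 2 statements merged into one kernel-verified Lean document; each statement's English description precedes it below -/
import Mathlib

section
/- Let M be defined on n×n real matrices entrywise by M(A)_{ij} = A_{ij} for i < j, M(A)_{ij} = −A_{ji} for i > j, and M(A)_{ii} = 0. If X and Y are symmetric n×n real matrices that commute (⁅X,Y⁆ = 0), then M(⁅M(X), Y⁆) − M(⁅M(Y), X⁆) − ⁅M(X), M(Y)⁆ = 0. (This is the vanishing of the bracket function of the two Toda vector fields T^X and T^Y, and is the key identity proving that Toda fields associated with commuting symmetric matrices commute.) -/
open Matrix

/-- The Toda projection: `M(A)_{ij} = A_{ij}` for `i < j`, `M(A)_{ij} = -A_{ji}` for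
`i > j`, and `M(A)_{ii} = 0`. -/
def todaProj {n : ℕ} (A : Matrix (Fin n) (Fin n) ℝ) : Matrix (Fin n) (Fin n) ℝ :=
  Matrix.of fun i j => if i < j then A i j else if j < i then -A j i else 0

/-!
Write `N(A) = A - M(A)`; it is lower triangular for every `A`, and `M` only sees the strictly
upper triangular part of its argument. For commuting `X`, `Y` a noncommutative-ring identity
rewrites `⁅M X, Y⁆ - ⁅M Y, X⁆ - ⁅M X, M Y⁆` as `⁅N Y, N X⁆`, a commutator of lower triangular
matrices, so `M` kills it. Finally `⁅M X, M Y⁆` is skew-symmetric, and `M` fixes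
skew-symmetric matrices.
-/

section

variable {n : ℕ}

theorem todaProj_sub (A B : Matrix (Fin n) (Fin n) ℝ) :
    todaProj (A - B) = todaProj A - todaProj B := by
  ext i j
  simp only [todaProj, of_apply, Matrix.sub_apply]
  split_ifs <;> ring

theorem transpose_todaProj (A : Matrix (Fin n) (Fin n) ℝ) : (todaProj A)ᵀ = -todaProj A := by
  ext i j
  simp only [todaProj, transpose_apply, Matrix.neg_apply, of_apply]
  rcases lt_trichotomy i j with h | rfl | h
  · simp [h, h.not_gt]
  · simp
  · simp [h, h.not_gt]

theorem todaProj_of_transpose_eq_neg {A : Matrix (Fin n) (Fin n) ℝ} (hA : Aᵀ = -A) :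
    todaProj A = A := by
  ext i j
  have hji : A j i = -A i j := by simpa using congr_fun₂ hA i j
  simp only [todaProj, of_apply]
  rcases lt_trichotomy i j with h | rfl | h
  · simp [h]
  · have : A i i = 0 := by linarith [hji]
    simp [this]
  · simp [h, h.not_gt, hji]

-- `BlockTriangular M OrderDual.toDual` says that `M` is lower triangular.
theorem blockTriangular_sub_todaProj (A : Matrix (Fin n) (Fin n) ℝ) :
    BlockTriangular (A - todaProj A) OrderDual.toDual := fun i j (h : i < j) => by
  simp [todaProj, h]

theorem todaProj_eq_zero_of_blockTriangular {Z : Matrix (Fin n) (Fin n) ℝ}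
    (hZ : BlockTriangular Z OrderDual.toDual) : todaProj Z = 0 := by
  ext i j
  simp only [todaProj, of_apply, Matrix.zero_apply]
  split_ifs with hij hji
  · exact hZ hij
  · rw [hZ hji, neg_zero]
  · rfl

end

theorem transpose_commutator_of_skew {n : Type*} [Fintype n] {R : Type*} [CommRing R]
    {A B : Matrix n n R} (hA : Aᵀ = -A) (hB : Bᵀ = -B) :
    (A * B - B * A)ᵀ = -(A * B - B * A) := by
  rw [transpose_sub, transpose_mul, transpose_mul, hA, hB]
  noncomm_ring

theorem todaFields_commute_identity_general {n : ℕ} (X Y : Matrix (Fin n) (Fin n) ℝ)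
    (hXY : X * Y - Y * X = 0) :
    todaProj (todaProj X * Y - Y * todaProj X)
      - todaProj (todaProj Y * X - X * todaProj Y)
      - (todaProj X * todaProj Y - todaProj Y * todaProj X) = 0 := by
  set P := todaProj X
  set Q := todaProj Y
  have hsplit : (P * Y - Y * P) - (Q * X - X * Q) - (P * Q - Q * P)
      = (Y - Q) * (X - P) - (X - P) * (Y - Q) := by
    rw [← sub_eq_zero, ← hXY]
    noncomm_ring
  have hlower : todaProj ((Y - Q) * (X - P) - (X - P) * (Y - Q)) = 0 :=
    todaProj_eq_zero_of_blockTriangular <|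
      ((blockTriangular_sub_todaProj Y).mul (blockTriangular_sub_todaProj X)).sub
        ((blockTriangular_sub_todaProj X).mul (blockTriangular_sub_todaProj Y))
  have hskew : todaProj (P * Q - Q * P) = P * Q - Q * P :=
    todaProj_of_transpose_eq_neg <|
      transpose_commutator_of_skew (transpose_todaProj X) (transpose_todaProj Y)
  rw [← hskew, ← todaProj_sub, ← todaProj_sub, hsplit, hlower]

/-- For commuting symmetric matrices `X`, `Y` one has
`M⁅M(X),Y⁆ - M⁅M(Y),X⁆ - ⁅M(X),M(Y)⁆ = 0` (the key identity showing that the Toda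
fields associated with commuting symmetric matrices commute). -/
theorem todaFields_commute_identity {n : ℕ} (X Y : Matrix (Fin n) (Fin n) ℝ)
    (hX : Xᵀ = X) (hY : Yᵀ = Y) (hXY : X * Y - Y * X = 0) :
    todaProj (todaProj X * Y - Y * todaProj X)
      - todaProj (todaProj Y * X - X * todaProj Y)
      - (todaProj X * todaProj Y - todaProj Y * todaProj X) = 0 :=
  todaFields_commute_identity_general X Y hXY
end

section
/- Let n = 4, let Λ = diag(λ₁,λ₂,λ₃,λ₄) be diagonal and let k : ℝ → Matrix (Fin 4) (Fin 4) ℝ satisfy, for every t, k'(t) = M(k(t)·Λ·k(t)ᵀ)·k(t) and k(t)ᵀ·k(t) = 1. For column indices a,b let m_{ab}(t) = k(t)_{1a}·k(t)_{2b} − k(t)_{1b}·k(t)_{2a} (the 2×2 top minors). If m_{14}(t) ≠ 0 and m_{23}(t) ≠ 0 for all t, then the cross-ratio t ↦ (m_{13}(t)·m_{24}(t))/(m_{14}(t)·m_{23}(t)) is constant along the Toda flow. -/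
open Matrix

attribute [local instance] Matrix.normedAddCommGroup Matrix.normedSpace

/-- The `2×2` minor of `k` on the first two rows and the columns `a`, `b`. -/
def topMinor (k : ℝ → Matrix (Fin 4) (Fin 4) ℝ) (a b : Fin 4) (t : ℝ) : ℝ :=
  k t 0 a * k t 1 b - k t 0 b * k t 1 a

/-!
Orthogonality turns `L = kΛkᵀ` into `Lk = kΛ`, and `M(L)` differs from `L` only on and below
the diagonal, so the first two rows of `k' = M(L)k` read `k₀' = (Λ - L₀₀)k₀` and
`k₁' = (Λ - L₁₁)k₁ - (L₀₁ + L₁₀)k₀`. The last term does not change the minors of these two rows,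
hence `m_ab' = (λ_a + λ_b - L₀₀ - L₁₁) m_ab`. In the cross-ratio the eigenvalues `λ₁,…,λ₄` and
the common factor `L₀₀ + L₁₁` appear once in the numerator and once in the denominator, so its
logarithmic derivative vanishes.
-/

section TodaRows

variable {n : ℕ}

theorem todaProj_mul_apply_zero (A k : Matrix (Fin (n + 1)) (Fin (n + 1)) ℝ) (c : Fin (n + 1)) :
    (todaProj A * k) 0 c = (A * k) 0 c - A 0 0 * k 0 c := by
  simp [Matrix.mul_apply, Fin.sum_univ_succ, todaProj, Fin.succ_pos]

theorem todaProj_mul_apply_one (A k : Matrix (Fin (n + 2)) (Fin (n + 2)) ℝ) (c : Fin (n + 2)) :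
    (todaProj A * k) 1 c = (A * k) 1 c - A 1 1 * k 1 c - (A 0 1 + A 1 0) * k 0 c := by
  have one_lt (j : Fin n) : (1 : Fin (n + 2)) < j.succ.succ := by simp [Fin.lt_def]
  simp only [todaProj, Matrix.mul_apply, of_apply, Fin.lt_one_iff, ite_mul, neg_mul, zero_mul,
    Fin.sum_univ_succ, not_lt_zero, ↓reduceIte, Fin.succ_ne_zero, Fin.succ_zero_eq_one,
    lt_self_iff_false, one_lt, zero_add]
  ring

theorem hasDerivAt_minor_of_toda {lam : Fin (n + 2) → ℝ}
    {k : ℝ → Matrix (Fin (n + 2)) (Fin (n + 2)) ℝ} {t : ℝ}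
    (hk : HasDerivAt k (todaProj (k t * diagonal lam * (k t)ᵀ) * k t) t)
    (horth : (k t)ᵀ * k t = 1) (a b : Fin (n + 2)) :
    HasDerivAt (fun s => k s 0 a * k s 1 b - k s 0 b * k s 1 a)
      ((lam a + lam b - (k t * diagonal lam * (k t)ᵀ) 0 0
          - (k t * diagonal lam * (k t)ᵀ) 1 1) * (k t 0 a * k t 1 b - k t 0 b * k t 1 a)) t := by
  set L := k t * diagonal lam * (k t)ᵀ
  have hLk (i c : Fin (n + 2)) : (L * k t) i c = lam c * k t i c := by
    rw [Matrix.mul_assoc, horth, Matrix.mul_one, mul_diagonal, mul_comm]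
  have hentry (i j : Fin (n + 2)) :
      HasDerivAt (fun s => k s i j) ((todaProj L * k t) i j) t :=
    hasDerivAt_pi.mp (hasDerivAt_pi.mp hk i) j
  refine (((hentry 0 a).mul (hentry 1 b)).sub ((hentry 0 b).mul (hentry 1 a))).congr_deriv ?_
  simp only [todaProj_mul_apply_zero, todaProj_mul_apply_one, hLk]
  ring

end TodaRows

theorem hasDerivAt_mul_of_hasDerivAt_mul_self {f g : ℝ → ℝ} {α β x : ℝ}
    (hf : HasDerivAt f (α * f x) x) (hg : HasDerivAt g (β * g x) x) :
    HasDerivAt (fun y => f y * g y) ((α + β) * (f x * g x)) x :=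
  (hf.mul hg).congr_deriv (by ring)

theorem div_eq_of_hasDerivAt_mul_self {f g c : ℝ → ℝ}
    (hf : ∀ x, HasDerivAt f (c x * f x) x) (hg : ∀ x, HasDerivAt g (c x * g x) x)
    (hg0 : ∀ x, g x ≠ 0) (x y : ℝ) :
    f x / g x = f y / g y := by
  have hquot (z : ℝ) : HasDerivAt (fun w => f w / g w) 0 z :=
    ((hf z).div (hg z) (hg0 z)).congr_deriv (by ring)
  exact is_const_of_deriv_eq_zero (fun z => (hquot z).differentiableAt)
    (fun z => (hquot z).deriv) x y

/-- For `SL₄`: the cross-ratio `(m₁₃·m₂₄)/(m₁₄·m₂₃)` of `2×2` top minors of an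
orthogonal solution `k(t)` of `k' = M(k·Λ·kᵀ)·k`, `Λ = diag(λ₁,…,λ₄)`, is constant
along the Toda flow (columns `1,2,3,4` are indices `0,1,2,3` of `Fin 4`). -/
theorem cross_ratio_invariant (lam : Fin 4 → ℝ)
    (k : ℝ → Matrix (Fin 4) (Fin 4) ℝ)
    (hk : ∀ t, HasDerivAt k
      (todaProj (k t * Matrix.diagonal lam * (k t)ᵀ) * k t) t)
    (horth : ∀ t, (k t)ᵀ * k t = 1)
    (h14 : ∀ t, topMinor k 0 3 t ≠ 0) (h23 : ∀ t, topMinor k 1 2 t ≠ 0) :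
    ∀ t : ℝ,
      topMinor k 0 2 t * topMinor k 1 3 t / (topMinor k 0 3 t * topMinor k 1 2 t)
        = topMinor k 0 2 0 * topMinor k 1 3 0
            / (topMinor k 0 3 0 * topMinor k 1 2 0) := by
  set L := fun s => k s * diagonal lam * (k s)ᵀ
  have hm (a b : Fin 4) (s : ℝ) : HasDerivAt (topMinor k a b)
      ((lam a + lam b - L s 0 0 - L s 1 1) * topMinor k a b s) s :=
    hasDerivAt_minor_of_toda (hk s) (horth s) a b
  have hrate (s : ℝ) : (lam 0 + lam 2 - L s 0 0 - L s 1 1) + (lam 1 + lam 3 - L s 0 0 - L s 1 1)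
      = (lam 0 + lam 3 - L s 0 0 - L s 1 1) + (lam 1 + lam 2 - L s 0 0 - L s 1 1) := by ring
  intro t
  refine div_eq_of_hasDerivAt_mul_self (fun s => hasDerivAt_mul_of_hasDerivAt_mul_self
    (hm 0 2 s) (hm 1 3 s)) (fun s => ?_) (fun s => mul_ne_zero (h14 s) (h23 s)) t 0
  rw [hrate]
  exact hasDerivAt_mul_of_hasDerivAt_mul_self (hm 0 3 s) (hm 1 2 s)
end
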